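/- Let R ⊆ S_n be a top-k partial ranking, let λ > 0, let H be a real inner product space, and let φ : S_n → H satisfy ⟨φ(σ), φ(σ')⟩ = exp(−λ d(σ, σ')) for all σ, σ' ∈ S_n, where d is the Kendall distance. Let μ = (1/|R|) Σ_{σ ∈ R} φ(σ) be the mean embedding of the uniform distribution on R. Then for every σ_1 ∈ R, the antithetic permutation A_R(σ_1) is the unique minimizer over σ_2 ∈ R of the herding objective ‖μ − (1/2)(φ(σ_1) + φ(σ_2))‖²; i.e. the optimal second herding sample given first sample σ_1 is exactly the antithetic permutation A_R(σ_1). -/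

import Mathlib

/-- The Kendall (tau) distance between two permutations of `Fin n`:
the number of pairs `(x, y)` with `x < y` on which `σ⁻¹` and `τ⁻¹`
disagree in relative order. -/
def kendallDist {n : ℕ} (σ τ : Equiv.Perm (Fin n)) : ℕ :=
  (Finset.univ.filter (fun p : Fin n × Fin n =>
    p.1 < p.2 ∧ ¬((σ⁻¹ p.1 < σ⁻¹ p.2) ↔ (τ⁻¹ p.1 < τ⁻¹ p.2)))).card

/-- The top-`k` partial ranking determined by the items `a 0, …, a (k-1)`:
the set of full rankings (permutations) `σ` with `σ i = a i` for the first
`k` positions. -/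
def topkFinset {n k : ℕ} (hk : k ≤ n) (a : Fin k → Fin n) :
    Finset (Equiv.Perm (Fin n)) :=
  Finset.univ.filter fun σ => ∀ i : Fin k, σ (Fin.castLE hk i) = a i

/-- The permutation of `Fin n` fixing the first `k` positions and reversing
the order of the remaining `n - k` positions. -/
def revAfter (n k : ℕ) : Equiv.Perm (Fin n) :=
  Function.Involutive.toPerm
    (fun p => if _h : (p : ℕ) < k then p
      else ⟨n + k - 1 - (p : ℕ), by have := p.isLt; omega⟩)
    (by
      intro p
      have hp := p.isLt
      by_cases h : (p : ℕ) < k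
      · simp [h]
      · have h2 : ¬ (n + k - 1 - (p : ℕ) < k) := by omega
        simp only [dif_neg h, dif_neg h2]
        ext
        simp
        omega)

/-- The antithetic permutation of `σ` relative to a top-`k` partial ranking:
the first `k` positions are unchanged and the remaining positions are
reversed, i.e. `A σ (k+j) = σ (n+1-j)` (in 1-indexed notation). -/
def antithetic (n k : ℕ) (σ : Equiv.Perm (Fin n)) : Equiv.Perm (Fin n) :=
  σ * revAfter n k

/-! Left multiplication preserves the Kendall distance and permutes `R`, so `⟪μ, φ σ⟫` takes the
same value for every `σ ∈ R`; as `‖φ σ‖ = 1`, the herding objective is a constant plus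
`exp (-λ d(σ₁, σ₂)) / 2`, and is minimized exactly where `d(σ₁, σ₂)` is maximal. This distance is
the number of inversions of `π = σ₂⁻¹ σ₁`, which fixes the first `k` positions, so every inversion
is a pair inside the tail block. The tail reversal inverts all of these pairs, and it is the only
such `π`: composing it with the reversal gives a strictly monotone, hence trivial, permutation. -/

open Finset Equiv

theorem Finset.two_mul_card_filter_lt {α : Type*} [LinearOrder α] [Fintype α]
    (P : α → α → Prop) [DecidableRel P] (hirrefl : ∀ x, ¬P x x) (hsymm : ∀ x y, P x y → P y x) :
    2 * #(univ.filter fun p : α × α => p.1 < p.2 ∧ P p.1 p.2) =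
      #(univ.filter fun p : α × α => P p.1 p.2) := by
  have hsplit : (univ.filter fun p : α × α => P p.1 p.2) =
      (univ.filter fun p : α × α => p.1 < p.2 ∧ P p.1 p.2) ∪
        (univ.filter fun p : α × α => p.2 < p.1 ∧ P p.1 p.2) := by
    ext ⟨x, y⟩
    simp only [mem_filter, mem_univ, true_and, mem_union]
    rcases lt_trichotomy x y with h | rfl | h <;> grind
  have hswap : #(univ.filter fun p : α × α => p.2 < p.1 ∧ P p.1 p.2) =
      #(univ.filter fun p : α × α => p.1 < p.2 ∧ P p.1 p.2) :=
    card_equiv (Equiv.prodComm α α) fun p => by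
      simp only [mem_filter, mem_univ, true_and, prodComm_apply, Prod.fst_swap, Prod.snd_swap]
      exact and_congr_right fun _ => ⟨hsymm _ _, hsymm _ _⟩
  rw [hsplit, card_union_of_disjoint, hswap, two_mul]
  exact disjoint_filter.2 fun p _ h h' => lt_asymm h.1 h'.1

section Kendall

variable {n : ℕ}

theorem two_mul_kendallDist (σ τ : Perm (Fin n)) :
    2 * kendallDist σ τ = #(univ.filter fun p : Fin n × Fin n =>
      ¬((σ⁻¹ p.1 < σ⁻¹ p.2) ↔ (τ⁻¹ p.1 < τ⁻¹ p.2))) := by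
  refine two_mul_card_filter_lt (fun x y => ¬((σ⁻¹ x < σ⁻¹ y) ↔ (τ⁻¹ x < τ⁻¹ y)))
    (fun _ => by simp) fun x y h => ?_
  rcases eq_or_ne x y with rfl | hxy
  · exact h
  have hσ := (σ⁻¹.injective.ne hxy).lt_or_gt
  have hτ := (τ⁻¹.injective.ne hxy).lt_or_gt
  grind

-- Counting disagreeing pairs in both orders makes the count independent of how items are labelled.
theorem kendallDist_mul_left (ρ σ τ : Perm (Fin n)) :
    kendallDist (ρ * σ) (ρ * τ) = kendallDist σ τ := by
  suffices 2 * kendallDist (ρ * σ) (ρ * τ) = 2 * kendallDist σ τ by omega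
  rw [two_mul_kendallDist, two_mul_kendallDist]
  exact card_equiv (ρ⁻¹.prodCongr ρ⁻¹) fun p => by simp [Perm.mul_apply]

@[simp]
theorem kendallDist_self (σ : Perm (Fin n)) : kendallDist σ σ = 0 := by
  simp [kendallDist]

def inversions (π : Perm (Fin n)) : Finset (Fin n × Fin n) :=
  univ.filter fun p => p.1 < p.2 ∧ π p.2 < π p.1

theorem kendallDist_one_left (π : Perm (Fin n)) :
    kendallDist 1 π = #(inversions π⁻¹) := by
  refine congrArg card (filter_congr fun p _ => and_congr_right fun hp => ?_)
  have := (π⁻¹.injective.ne hp.ne).lt_or_gt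
  simp only [inv_one, Perm.one_apply, hp, true_iff]
  grind

theorem kendallDist_eq_card_inversions (σ τ : Perm (Fin n)) :
    kendallDist σ τ = #(inversions (τ⁻¹ * σ)) := by
  rw [← kendallDist_mul_left σ⁻¹, inv_mul_cancel, kendallDist_one_left]
  group

end Kendall

section Reversal

variable {n k : ℕ}

theorem revAfter_apply_of_lt {p : Fin n} (hp : (p : ℕ) < k) : revAfter n k p = p :=
  dif_pos hp

theorem revAfter_val_of_le {p : Fin n} (hp : k ≤ (p : ℕ)) :
    (revAfter n k p : ℕ) = n + k - 1 - p :=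
  congrArg Fin.val (dif_neg (not_lt.2 hp))

@[simp]
theorem revAfter_inv : (revAfter n k)⁻¹ = revAfter n k :=
  Function.Involutive.toPerm_symm _

def tailPairs (n k : ℕ) : Finset (Fin n × Fin n) :=
  univ.filter fun p => p.1 < p.2 ∧ k ≤ (p.1 : ℕ)

variable {π : Perm (Fin n)}

theorem le_apply_of_fixes (hπ : ∀ j : Fin n, (j : ℕ) < k → π j = j) {x : Fin n}
    (hx : k ≤ (x : ℕ)) : k ≤ (π x : ℕ) := by
  by_contra! h
  have := π.injective (hπ _ h)
  omega

theorem inversions_subset_tailPairs (hπ : ∀ j : Fin n, (j : ℕ) < k → π j = j) :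
    inversions π ⊆ tailPairs n k := by
  rintro ⟨u, v⟩ huv
  simp only [inversions, tailPairs, mem_filter, mem_univ, true_and] at huv ⊢
  obtain ⟨huv, hinv⟩ := huv
  refine ⟨huv, not_lt.1 fun hu => ?_⟩
  rw [hπ u hu] at hinv
  by_cases hv : (v : ℕ) < k
  · rw [hπ v hv] at hinv
    exact lt_asymm huv hinv
  · exact absurd (le_apply_of_fixes hπ (not_lt.1 hv)) (by omega)

theorem inversions_revAfter : inversions (revAfter n k) = tailPairs n k := by
  refine (inversions_subset_tailPairs fun j => revAfter_apply_of_lt).antisymm fun ⟨u, v⟩ h => ?_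
  simp only [inversions, tailPairs, mem_filter, mem_univ, true_and] at h ⊢
  obtain ⟨huv, hu⟩ := h
  have : (u : ℕ) < v := huv
  refine ⟨huv, ?_⟩
  rw [Fin.lt_def, revAfter_val_of_le hu, revAfter_val_of_le (by omega)]
  omega

theorem eq_revAfter_of_tailPairs_subset (hπ : ∀ j : Fin n, (j : ℕ) < k → π j = j)
    (h : tailPairs n k ⊆ inversions π) : π = revAfter n k := by
  suffices hmono : StrictMono (π * revAfter n k) by
    rw [← mul_inv_eq_one, revAfter_inv]
    exact DFunLike.coe_injective hmono.eq_id
  intro x y hxy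
  simp only [Perm.mul_apply]
  by_cases hy : (y : ℕ) < k
  · have hx : (x : ℕ) < k := lt_trans hxy hy
    rwa [revAfter_apply_of_lt hx, revAfter_apply_of_lt hy, hπ x hx, hπ y hy]
  have hry : k ≤ (revAfter n k y : ℕ) := by
    rw [revAfter_val_of_le (not_lt.1 hy)]; omega
  by_cases hx : (x : ℕ) < k
  · rw [revAfter_apply_of_lt hx, hπ x hx, Fin.lt_def]
    exact lt_of_lt_of_le hx (le_apply_of_fixes hπ hry)
  · have hrev : revAfter n k y < revAfter n k x := by
      rw [Fin.lt_def, revAfter_val_of_le (not_lt.1 hx), revAfter_val_of_le (not_lt.1 hy)]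
      have := y.isLt; have : (x : ℕ) < y := hxy; omega
    have := h (show (revAfter n k y, revAfter n k x) ∈ tailPairs n k from
      mem_filter.2 ⟨mem_univ _, hrev, hry⟩)
    exact (mem_filter.1 this).2.2

theorem card_inversions_le_revAfter (hπ : ∀ j : Fin n, (j : ℕ) < k → π j = j) :
    #(inversions π) ≤ #(inversions (revAfter n k)) :=
  inversions_revAfter (n := n) ▸ card_le_card (inversions_subset_tailPairs hπ)

theorem card_inversions_lt_revAfter (hπ : ∀ j : Fin n, (j : ℕ) < k → π j = j)
    (hne : π ≠ revAfter n k) : #(inversions π) < #(inversions (revAfter n k)) := by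
  rw [inversions_revAfter]
  exact card_lt_card ⟨inversions_subset_tailPairs hπ,
    fun h => hne (eq_revAfter_of_tailPairs_subset hπ h)⟩

end Reversal

section TopK

variable {n k : ℕ} {hk : k ≤ n} {a : Fin k → Fin n} {σ σ₁ σ₂ : Perm (Fin n)}

theorem mem_topkFinset : σ ∈ topkFinset hk a ↔ ∀ i : Fin k, σ (Fin.castLE hk i) = a i := by
  simp [topkFinset]

theorem inv_mul_apply_of_mem_topkFinset (h₁ : σ₁ ∈ topkFinset hk a)
    (h₂ : σ₂ ∈ topkFinset hk a) (j : Fin n) (hj : (j : ℕ) < k) : (σ₂⁻¹ * σ₁) j = j := by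
  have hj' : j = Fin.castLE hk ⟨j, hj⟩ := rfl
  rw [Perm.mul_apply, Perm.inv_eq_iff_eq, hj', mem_topkFinset.1 h₁, mem_topkFinset.1 h₂]

theorem mul_inv_mul_mem_topkFinset (h : σ ∈ topkFinset hk a) (h₁ : σ₁ ∈ topkFinset hk a)
    (h₂ : σ₂ ∈ topkFinset hk a) : σ₂ * σ₁⁻¹ * σ ∈ topkFinset hk a := by
  refine mem_topkFinset.2 fun i => ?_
  rw [mul_assoc, Perm.mul_apply, inv_mul_apply_of_mem_topkFinset h h₁ _ (by simp),
    mem_topkFinset.1 h₂]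

theorem antithetic_mem_topkFinset (h : σ ∈ topkFinset hk a) :
    antithetic n k σ ∈ topkFinset hk a := by
  rw [mem_topkFinset] at *
  intro i
  rw [antithetic, Perm.mul_apply, revAfter_apply_of_lt (by simp), h]

theorem kendallDist_le_kendallDist_antithetic (h₁ : σ₁ ∈ topkFinset hk a)
    (h₂ : σ₂ ∈ topkFinset hk a) : kendallDist σ₁ σ₂ ≤ kendallDist σ₁ (antithetic n k σ₁) := by
  rw [kendallDist_eq_card_inversions, kendallDist_eq_card_inversions, antithetic]
  simpa using card_inversions_le_revAfter (inv_mul_apply_of_mem_topkFinset h₁ h₂)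

theorem kendallDist_lt_kendallDist_antithetic (h₁ : σ₁ ∈ topkFinset hk a)
    (h₂ : σ₂ ∈ topkFinset hk a) (hne : σ₂ ≠ antithetic n k σ₁) :
    kendallDist σ₁ σ₂ < kendallDist σ₁ (antithetic n k σ₁) := by
  rw [kendallDist_eq_card_inversions, kendallDist_eq_card_inversions, antithetic]
  have hne' : σ₂⁻¹ * σ₁ ≠ revAfter n k := fun h => hne (by rw [antithetic, ← revAfter_inv, ← h]; group)
  simpa using card_inversions_lt_revAfter (inv_mul_apply_of_mem_topkFinset h₁ h₂) hne'

theorem sum_topkFinset_kendallDist_eq {β : Type*} [AddCommMonoid β] (f : ℕ → β)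
    (h₁ : σ₁ ∈ topkFinset hk a) (h₂ : σ₂ ∈ topkFinset hk a) :
    ∑ σ ∈ topkFinset hk a, f (kendallDist σ σ₁) = ∑ σ ∈ topkFinset hk a, f (kendallDist σ σ₂) :=
  sum_nbij' (σ₂ * σ₁⁻¹ * ·) (σ₁ * σ₂⁻¹ * ·)
    (fun _ h => mul_inv_mul_mem_topkFinset h h₁ h₂) (fun _ h => mul_inv_mul_mem_topkFinset h h₂ h₁)
    (fun _ _ => by group) (fun _ _ => by group)
    fun σ _ => by
      rw [← kendallDist_mul_left (σ₂ * σ₁⁻¹) σ σ₁, inv_mul_cancel_right]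

end TopK

theorem norm_sub_half_smul_add_sq {H : Type*} [NormedAddCommGroup H] [InnerProductSpace ℝ H]
    (μ x y : H) :
    ‖μ - (1 / 2 : ℝ) • (x + y)‖ ^ 2 =
      ‖μ‖ ^ 2 - (inner ℝ μ x + inner ℝ μ y) + (‖x‖ ^ 2 + 2 * inner ℝ x y + ‖y‖ ^ 2) / 4 := by
  rw [norm_sub_sq_real, norm_smul, mul_pow, norm_add_sq_real, real_inner_smul_right,
    inner_add_right]
  norm_num
  ring

theorem antithetic_optimal_herding_general {n k : ℕ} (hk : k ≤ n)
    (a : Fin k → Fin n)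
    (lam : ℝ) (hlam : 0 < lam)
    {H : Type*} [NormedAddCommGroup H] [InnerProductSpace ℝ H]
    (φ : Equiv.Perm (Fin n) → H)
    (hφ : ∀ σ τ : Equiv.Perm (Fin n),
      (inner ℝ (φ σ) (φ τ) : ℝ) = Real.exp (-lam * (kendallDist σ τ : ℝ))) :
    ∀ σ₁ ∈ topkFinset hk a,
      let R := topkFinset hk a
      let μ : H := (R.card : ℝ)⁻¹ • ∑ σ ∈ R, φ σ
      antithetic n k σ₁ ∈ R ∧
      (∀ σ₂ ∈ R,
        ‖μ - (1 / 2 : ℝ) • (φ σ₁ + φ (antithetic n k σ₁))‖ ^ 2 ≤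
          ‖μ - (1 / 2 : ℝ) • (φ σ₁ + φ σ₂)‖ ^ 2) ∧
      (∀ σ₂ ∈ R, σ₂ ≠ antithetic n k σ₁ →
        ‖μ - (1 / 2 : ℝ) • (φ σ₁ + φ (antithetic n k σ₁))‖ ^ 2 <
          ‖μ - (1 / 2 : ℝ) • (φ σ₁ + φ σ₂)‖ ^ 2) := by
  intro σ₁ h₁ R μ
  have hnorm (σ : Perm (Fin n)) : ‖φ σ‖ ^ 2 = 1 := by
    rw [← real_inner_self_eq_norm_sq, hφ, kendallDist_self]
    simp
  have hμ (σ) (h : σ ∈ R) : inner ℝ μ (φ σ) = inner ℝ μ (φ σ₁) := by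
    simp only [μ, real_inner_smul_left, sum_inner, hφ]
    rw [sum_topkFinset_kendallDist_eq (fun d => Real.exp (-lam * d)) h h₁]
  have hobj (σ₂) (h₂ : σ₂ ∈ R) : ‖μ - (1 / 2 : ℝ) • (φ σ₁ + φ σ₂)‖ ^ 2 =
      ‖μ‖ ^ 2 - 2 * inner ℝ μ (φ σ₁) + 1 / 2 + Real.exp (-(lam * kendallDist σ₁ σ₂)) / 2 := by
    rw [norm_sub_half_smul_add_sq, hμ σ₂ h₂, hnorm, hnorm, hφ, neg_mul]
    ring
  have hA : antithetic n k σ₁ ∈ R := antithetic_mem_topkFinset h₁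
  refine ⟨hA, fun σ₂ h₂ => ?_, fun σ₂ h₂ hne => ?_⟩ <;> rw [hobj _ h₂, hobj _ hA]
  · gcongr
    exact kendallDist_le_kendallDist_antithetic h₁ h₂
  · gcongr
    exact kendallDist_lt_kendallDist_antithetic h₁ h₂ hne

/-- Antithetic sampling as optimal kernel herding: let `R` be a top-`k`
partial ranking, `λ > 0`, and let `φ : S_n → H` be a feature map for the
Mallows kernel, i.e. `⟨φ(σ), φ(σ')⟩ = exp(−λ d(σ, σ'))` with `d` the Kendall
distance. With `μ` the mean embedding of the uniform distribution on `R`, for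
every first sample `σ₁ ∈ R` the antithetic permutation `A_R(σ₁)` lies in `R`
and is the unique minimizer over `σ₂ ∈ R` of the herding objective
`‖μ − (1/2)(φ(σ₁) + φ(σ₂))‖²`. -/
theorem antithetic_optimal_herding {n k : ℕ} (hk : k ≤ n)
    (a : Fin k → Fin n) (ha : Function.Injective a)
    (lam : ℝ) (hlam : 0 < lam)
    {H : Type*} [NormedAddCommGroup H] [InnerProductSpace ℝ H]
    (φ : Equiv.Perm (Fin n) → H)
    (hφ : ∀ σ τ : Equiv.Perm (Fin n),
      (inner ℝ (φ σ) (φ τ) : ℝ) = Real.exp (-lam * (kendallDist σ τ : ℝ))) :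
    ∀ σ₁ ∈ topkFinset hk a,
      let R := topkFinset hk a
      let μ : H := (R.card : ℝ)⁻¹ • ∑ σ ∈ R, φ σ
      antithetic n k σ₁ ∈ R ∧
      (∀ σ₂ ∈ R,
        ‖μ - (1 / 2 : ℝ) • (φ σ₁ + φ (antithetic n k σ₁))‖ ^ 2 ≤
          ‖μ - (1 / 2 : ℝ) • (φ σ₁ + φ σ₂)‖ ^ 2) ∧
      (∀ σ₂ ∈ R, σ₂ ≠ antithetic n k σ₁ →
        ‖μ - (1 / 2 : ℝ) • (φ σ₁ + φ (antithetic n k σ₁))‖ ^ 2 <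
          ‖μ - (1 / 2 : ℝ) • (φ σ₁ + φ σ₂)‖ ^ 2) :=
  antithetic_optimal_herding_general hk a lam hlam φ hφ
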